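/- Let ζ ∈ (0, 1/2), β > 0, and C > 0. Then there exist constants C' > 0 and ε₁ > 0 such that for all ε ∈ (0, ε₁), max over real l ≥ ε^{-1} of (2Cβ√(ε log l / l) − l^{ζ−1}/2) ≤ C'·(β² ε |log ε|)^{(1−ζ)/(1−2ζ)}. -/
import Mathlib

lemma my_sqrt_add (x y : ℝ) (hx : 0 ≤ x) (hy : 0 ≤ y) :
    Real.sqrt (x + y) ≤ Real.sqrt x + Real.sqrt y := by
  have h : Real.sqrt (x + y) ≤ Real.sqrt ((Real.sqrt x + Real.sqrt y) ^ 2) := by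
    apply Real.sqrt_le_sqrt
    nlinarith [Real.sq_sqrt hx, Real.sq_sqrt hy, Real.sqrt_nonneg x, Real.sqrt_nonneg y]
  rwa [Real.sqrt_sq (by positivity)] at h

lemma my_young (θ K : ℝ) (hθ0 : 0 ≤ θ) (hθ1 : θ < 1) (hK : 0 < K) :
    ∃ D > (0:ℝ), ∀ A : ℝ, 0 < A → K * A ^ θ ≤ A / 4 + D := by
  set A₀ : ℝ := (4 * K) ^ ((1 - θ)⁻¹) with hA₀def
  have h4K : (0:ℝ) < 4 * K := by linarith
  have hA₀ : 0 < A₀ := Real.rpow_pos_of_pos h4K _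
  refine ⟨K * A₀ ^ θ + 1, by positivity, fun A hA => ?_⟩
  rcases le_total A A₀ with h | h
  · have h1 : A ^ θ ≤ A₀ ^ θ := Real.rpow_le_rpow hA.le h hθ0
    have h2 : K * A ^ θ ≤ K * A₀ ^ θ := by
      exact mul_le_mul_of_nonneg_left h1 hK.le
    linarith
  · have h1 : A ^ θ = A ^ (θ - 1) * A := by
      rw [← Real.rpow_add_one hA.ne']; ring_nf
    have h2 : A ^ (θ - 1) ≤ A₀ ^ (θ - 1) :=
      Real.rpow_le_rpow_of_nonpos hA₀ h (by linarith)
    have h3 : A₀ ^ (θ - 1) = (4 * K)⁻¹ := by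
      rw [hA₀def, ← Real.rpow_mul h4K.le,
        show (1 - θ)⁻¹ * (θ - 1) = -1 by
          rw [show θ - 1 = -(1 - θ) by ring, mul_neg, inv_mul_cancel₀ (by linarith)],
        Real.rpow_neg_one]
    have h4 : K * A ^ θ ≤ K * ((4 * K)⁻¹ * A) := by
      rw [h1]
      apply mul_le_mul_of_nonneg_left _ hK.le
      apply mul_le_mul_of_nonneg_right _ hA.le
      rw [← h3]; exact h2
    have h5 : K * ((4 * K)⁻¹ * A) = A / 4 := by
      field_simp
    nlinarith [Real.rpow_pos_of_pos hA₀ θ]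

set_option maxHeartbeats 1000000 in
theorem max_bound_for_zeta_lt_half (ζ β C : ℝ) (hζ0 : 0 < ζ) (hζ : ζ < 1 / 2)
    (hβ : 0 < β) (hC : 0 < C) :
    ∃ C' > (0 : ℝ), ∃ ε₁ > (0 : ℝ), ∀ ε : ℝ, 0 < ε → ε < ε₁ →
      ∀ l : ℝ, ε⁻¹ ≤ l →
        2 * C * β * Real.sqrt (ε * Real.log l / l) - l ^ (ζ - 1) / 2 ≤
          C' * (β ^ 2 * ε * |Real.log ε|) ^ ((1 - ζ) / (1 - 2 * ζ)) := by
  have h12 : 0 < 1 - 2 * ζ := by linarith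
  have h1ζ : 0 < 1 - ζ := by linarith
  obtain ⟨c₁, hc₁def⟩ : ∃ c₁ : ℝ, c₁ = 2 / (1 - 2 * ζ) := ⟨_, rfl⟩
  have hc₁ : 0 < c₁ := by rw [hc₁def]; positivity
  have hsc₁ : 0 < Real.sqrt c₁ := Real.sqrt_pos.mpr hc₁
  obtain ⟨D₁, hD₁, hY₁⟩ := my_young ((1/2) / (1 - ζ)) (2 * C * Real.sqrt c₁)
    (by positivity) (by rw [div_lt_one h1ζ]; linarith) (by positivity)
  obtain ⟨D₂, hD₂, hY₂⟩ := my_young ((3/8) / (1 - ζ)) (4 * C)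
    (by positivity) (by rw [div_lt_one h1ζ]; linarith) (by positivity)
  refine ⟨D₁ + D₂, by positivity, min (Real.exp (-1)) (β ^ 2), by positivity,
    fun ε hε0 hε1 l hl => ?_⟩
  have hεe : ε < Real.exp (-1) := lt_of_lt_of_le hε1 (min_le_left _ _)
  have hεβ : ε < β ^ 2 := lt_of_lt_of_le hε1 (min_le_right _ _)
  have hε1' : ε < 1 := hεe.trans (by
    calc Real.exp (-1) < Real.exp 0 := Real.exp_lt_exp.mpr (by norm_num)
    _ = 1 := Real.exp_zero)
  have hlogε : Real.log ε < -1 := by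
    have h := Real.log_lt_log hε0 hεe
    rwa [Real.log_exp] at h
  have habs : |Real.log ε| = -Real.log ε := abs_of_neg (by linarith)
  have habs1 : 1 ≤ |Real.log ε| := by rw [habs]; linarith
  have habs0 : 0 < |Real.log ε| := by linarith
  obtain ⟨X, hXdef⟩ : ∃ X : ℝ, X = β ^ 2 * ε * |Real.log ε| := ⟨_, rfl⟩
  have hX : 0 < X := by rw [hXdef]; positivity
  obtain ⟨l₀, hl₀def⟩ : ∃ l₀ : ℝ, l₀ = X ^ (-(1 - 2 * ζ)⁻¹) := ⟨_, rfl⟩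
  have hl₀ : 0 < l₀ := hl₀def ▸ Real.rpow_pos_of_pos hX _
  have hl0 : 0 < l := lt_of_lt_of_le (by positivity) hl
  have hl1 : 1 < l := lt_of_lt_of_le ((one_lt_inv₀ hε0).mpr hε1') hl
  have hlogl : 0 < Real.log l := Real.log_pos hl1
  obtain ⟨u, hudef⟩ : ∃ u : ℝ, u = l / l₀ := ⟨_, rfl⟩
  have hu : 0 < u := hudef ▸ div_pos hl0 hl₀
  have hlu : l = u * l₀ := by rw [hudef]; field_simp
  -- log l₀ ≤ c₁ |log ε|
  have hlogl₀ : Real.log l₀ ≤ c₁ * |Real.log ε| := by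
    rw [hl₀def, Real.log_rpow hX]
    have hlogX : Real.log X = Real.log (β ^ 2) + Real.log ε + Real.log |Real.log ε| := by
      rw [hXdef, Real.log_mul (by positivity) habs0.ne', Real.log_mul (by positivity) hε0.ne']
    have h1 : 0 ≤ Real.log |Real.log ε| := Real.log_nonneg habs1
    have h2 : Real.log ε ≤ Real.log (β ^ 2) := Real.log_le_log hε0 hεβ.le
    have h3 : -Real.log X ≤ 2 * (-Real.log ε) := by rw [hlogX]; linarith
    calc -(1 - 2 * ζ)⁻¹ * Real.log X = (-Real.log X) / (1 - 2 * ζ) := by ring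
      _ ≤ (2 * (-Real.log ε)) / (1 - 2 * ζ) := by gcongr
      _ = c₁ * |Real.log ε| := by rw [habs, hc₁def]; ring
  -- log l ≤ c₁|log ε| + 4 u^{1/4}
  have hlogu : Real.log u ≤ 4 * u ^ ((1:ℝ)/4) := by
    have h := Real.log_le_sub_one_of_pos (Real.rpow_pos_of_pos hu ((1:ℝ)/4))
    rw [Real.log_rpow hu] at h
    have h2 := Real.rpow_pos_of_pos hu ((1:ℝ)/4)
    linarith
  have hlogl_le : Real.log l ≤ c₁ * |Real.log ε| + 4 * u ^ ((1:ℝ)/4) := by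
    have h : Real.log l = Real.log u + Real.log l₀ := by
      rw [hlu, Real.log_mul hu.ne' hl₀.ne']
    linarith
  obtain ⟨P, hPdef⟩ : ∃ P : ℝ, P = X ^ ((1 - ζ) / (1 - 2 * ζ)) := ⟨_, rfl⟩
  have hP : 0 < P := hPdef ▸ Real.rpow_pos_of_pos hX _
  have usqrt : Real.sqrt l = u ^ ((1:ℝ)/2) * Real.sqrt l₀ := by
    rw [hlu, Real.sqrt_mul hu.le, Real.sqrt_eq_rpow u]
  have hKey : X ^ ((1:ℝ)/2) / Real.sqrt l₀ = P := by
    rw [Real.sqrt_eq_rpow, hl₀def, ← Real.rpow_mul hX.le, ← Real.rpow_sub hX, hPdef]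
    congr 1
    field_simp
    try ring
  have hul : u ^ (ζ - 1) * P = l ^ (ζ - 1) := by
    have h1 : l₀ ^ (ζ - 1) = P := by
      rw [hl₀def, ← Real.rpow_mul hX.le, hPdef]
      congr 1
      field_simp
      try ring
    rw [hlu, Real.mul_rpow hu.le hl₀.le, h1]
  -- step 0: bound inside the sqrt
  have S0 : ε * Real.log l / l ≤
      (ε * (c₁ * |Real.log ε|) + ε * (4 * u ^ ((1:ℝ)/4))) / l := by
    gcongr
    nlinarith [mul_le_mul_of_nonneg_left hlogl_le hε0.le]
  have S1 : Real.sqrt (ε * Real.log l / l) ≤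
      (Real.sqrt (ε * (c₁ * |Real.log ε|)) + Real.sqrt (ε * (4 * u ^ ((1:ℝ)/4)))) /
        Real.sqrt l := by
    calc Real.sqrt (ε * Real.log l / l)
        ≤ Real.sqrt ((ε * (c₁ * |Real.log ε|) + ε * (4 * u ^ ((1:ℝ)/4))) / l) :=
          Real.sqrt_le_sqrt S0
      _ = Real.sqrt (ε * (c₁ * |Real.log ε|) + ε * (4 * u ^ ((1:ℝ)/4))) / Real.sqrt l := by
          rw [Real.sqrt_div (by positivity)]
      _ ≤ _ := by
          gcongr
          exact my_sqrt_add _ _ (by positivity) (by positivity)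
  have hB1 : β * Real.sqrt (ε * (c₁ * |Real.log ε|)) = Real.sqrt c₁ * X ^ ((1:ℝ)/2) := by
    have h1 : β * Real.sqrt (ε * (c₁ * |Real.log ε|)) =
        Real.sqrt (β ^ 2 * (ε * (c₁ * |Real.log ε|))) := by
      rw [Real.sqrt_mul (by positivity : (0:ℝ) ≤ β ^ 2) (ε * (c₁ * |Real.log ε|)), Real.sqrt_sq hβ.le]
    rw [h1, show β ^ 2 * (ε * (c₁ * |Real.log ε|)) = c₁ * X by rw [hXdef]; ring,
      Real.sqrt_mul hc₁.le, Real.sqrt_eq_rpow X]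
  have hB2 : β * Real.sqrt (ε * (4 * u ^ ((1:ℝ)/4))) ≤ 2 * X ^ ((1:ℝ)/2) * u ^ ((1:ℝ)/8) := by
    have h1 : β * Real.sqrt (ε * (4 * u ^ ((1:ℝ)/4))) =
        Real.sqrt (β ^ 2 * ε * (4 * u ^ ((1:ℝ)/4))) := by
      rw [show β ^ 2 * ε * (4 * u ^ ((1:ℝ)/4)) = β ^ 2 * (ε * (4 * u ^ ((1:ℝ)/4))) by ring,
        Real.sqrt_mul (by positivity : (0:ℝ) ≤ β ^ 2) (ε * (4 * u ^ ((1:ℝ)/4))), Real.sqrt_sq hβ.le]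
    have h2 : β ^ 2 * ε * (4 * u ^ ((1:ℝ)/4)) ≤ X * (4 * u ^ ((1:ℝ)/4)) := by
      have h3 : β ^ 2 * ε ≤ X := by
        rw [hXdef]
        have h4 := mul_le_mul_of_nonneg_left habs1
          (le_of_lt (mul_pos (pow_pos hβ 2) hε0))
        rw [mul_one] at h4
        linarith
      exact mul_le_mul_of_nonneg_right h3 (by positivity)
    calc β * Real.sqrt (ε * (4 * u ^ ((1:ℝ)/4)))
        ≤ Real.sqrt (X * (4 * u ^ ((1:ℝ)/4))) := by rw [h1]; exact Real.sqrt_le_sqrt h2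
      _ = 2 * X ^ ((1:ℝ)/2) * u ^ ((1:ℝ)/8) := by
          rw [show X * (4 * u ^ ((1:ℝ)/4)) = 4 * (X * u ^ ((1:ℝ)/4)) by ring,
            Real.sqrt_mul (by norm_num),
            show Real.sqrt 4 = 2 by
              rw [show (4:ℝ) = 2 ^ 2 by norm_num, Real.sqrt_sq (by norm_num)],
            Real.sqrt_mul hX.le, Real.sqrt_eq_rpow X, Real.sqrt_eq_rpow,
            ← Real.rpow_mul hu.le]
          norm_num
          ring
  have hfrac : X ^ ((1:ℝ)/2) / Real.sqrt l = u ^ (-(1:ℝ)/2) * P := by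
    rw [usqrt, ← hKey, show (-(1:ℝ)/2) = -((1:ℝ)/2) by norm_num, Real.rpow_neg hu.le]
    have h1 : u ^ ((1:ℝ)/2) ≠ 0 := (Real.rpow_pos_of_pos hu _).ne'
    have h2 : Real.sqrt l₀ ≠ 0 := (Real.sqrt_pos.mpr hl₀).ne'
    field_simp
  have hmerge : u ^ ((1:ℝ)/8) * u ^ (-(1:ℝ)/2) = u ^ (-(3:ℝ)/8) := by
    rw [← Real.rpow_add hu]; norm_num
  have Ymain : 2 * C * Real.sqrt c₁ * u ^ (-(1:ℝ)/2) + 4 * C * u ^ (-(3:ℝ)/8)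
      ≤ u ^ (ζ - 1) / 2 + (D₁ + D₂) := by
    have hA : 0 < u ^ (ζ - 1) := Real.rpow_pos_of_pos hu _
    have e1 : u ^ (-(1:ℝ)/2) = (u ^ (ζ - 1)) ^ ((1/2) / (1 - ζ)) := by
      rw [← Real.rpow_mul hu.le]
      congr 1
      field_simp
      try ring
    have e2 : u ^ (-(3:ℝ)/8) = (u ^ (ζ - 1)) ^ ((3/8) / (1 - ζ)) := by
      rw [← Real.rpow_mul hu.le]
      congr 1
      field_simp
      try ring
    have y1 := hY₁ _ hA
    have y2 := hY₂ _ hA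
    rw [e1, e2]
    linarith
  have main : 2 * C * β * Real.sqrt (ε * Real.log l / l) ≤ l ^ (ζ - 1) / 2 + (D₁ + D₂) * P := by
    calc 2 * C * β * Real.sqrt (ε * Real.log l / l)
        ≤ 2 * C * β * ((Real.sqrt (ε * (c₁ * |Real.log ε|)) +
            Real.sqrt (ε * (4 * u ^ ((1:ℝ)/4)))) / Real.sqrt l) :=
          mul_le_mul_of_nonneg_left S1 (by positivity)
      _ = 2 * C * (β * Real.sqrt (ε * (c₁ * |Real.log ε|)) +
            β * Real.sqrt (ε * (4 * u ^ ((1:ℝ)/4)))) / Real.sqrt l := by ring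
      _ ≤ 2 * C * (Real.sqrt c₁ * X ^ ((1:ℝ)/2) + 2 * X ^ ((1:ℝ)/2) * u ^ ((1:ℝ)/8)) /
            Real.sqrt l := by
          rw [hB1]
          gcongr
      _ = (2 * C * Real.sqrt c₁ + 4 * C * u ^ ((1:ℝ)/8)) * (X ^ ((1:ℝ)/2) / Real.sqrt l) := by
          ring
      _ = (2 * C * Real.sqrt c₁ + 4 * C * u ^ ((1:ℝ)/8)) * (u ^ (-(1:ℝ)/2) * P) := by
          rw [hfrac]
      _ = (2 * C * Real.sqrt c₁ * u ^ (-(1:ℝ)/2) +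
            4 * C * (u ^ ((1:ℝ)/8) * u ^ (-(1:ℝ)/2))) * P := by ring
      _ = (2 * C * Real.sqrt c₁ * u ^ (-(1:ℝ)/2) + 4 * C * u ^ (-(3:ℝ)/8)) * P := by
          rw [hmerge]
      _ ≤ (u ^ (ζ - 1) / 2 + (D₁ + D₂)) * P := mul_le_mul_of_nonneg_right Ymain hP.le
      _ = u ^ (ζ - 1) * P / 2 + (D₁ + D₂) * P := by ring
      _ = l ^ (ζ - 1) / 2 + (D₁ + D₂) * P := by rw [hul]
  rw [← hXdef, ← hPdef]
  linarith
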